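/- The subalgebra ℂ[β₂, β₃] of R is stable under the column-permutation action of S₃; its S₃-invariants are ℂ[β₂, β₃]^{S₃} = ℂ[α₂, α₃], and its sign-isotypic part is ℂ[β₂, β₃]^{sgn} = α₁γ₂ · ℂ[α₂, α₃]. -/

import Mathlib

open MvPolynomial

noncomputable section

/-- The polynomial ring `R = ℂ[x_{ij} : i ∈ {1,2}, j ∈ {1,2,3}]`. -/
abbrev R : Type := MvPolynomial (Fin 2 × Fin 3) ℂ

/-- The action of `σ ∈ S₃` permuting the second index: `x_{ij} ↦ x_{iσ(j)}`. -/
def permAct (σ : Equiv.Perm (Fin 3)) : R →ₐ[ℂ] R :=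
  aeval fun p : Fin 2 × Fin 3 => X (p.1, σ p.2)

/-- The variable `x_{(i+1)(j+1)}` (0-indexed row `i : Fin 2` and column `j : Fin 3`). -/
def Xe (i : Fin 2) (j : Fin 3) : R := X (i, j)

/-- `δ_{ij} = x_{1i} x_{2j} − x_{2i} x_{1j}` (0-indexed columns `i j : Fin 3`). -/
def del (i j : Fin 3) : R := Xe 0 i * Xe 1 j - Xe 1 i * Xe 0 j

/-- `α₁ = x₁₁ x₁₂ x₁₃`. -/
def alpha1 : R := Xe 0 0 * Xe 0 1 * Xe 0 2

/-- `β₂ = x₁₂ δ₁₃`. -/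
def beta2 : R := Xe 0 1 * del 0 2

/-- `β₃ = x₁₃ δ₁₂`. -/
def beta3 : R := Xe 0 2 * del 0 1

/-- `γ₂ = δ₁₂ δ₁₃ δ₂₃`. -/
def gamma2 : R := del 0 1 * del 0 2 * del 1 2

/-- `α₂ = β₂² + β₃² − β₂ β₃`. -/
def alpha2 : R := beta2 ^ 2 + beta3 ^ 2 - beta2 * beta3

/-- `α₃ = 2(β₂³ + β₃³) − 3(β₂² β₃ + β₂ β₃²)`. -/
def alpha3 : R := 2 * (beta2 ^ 3 + beta3 ^ 3) - 3 * (beta2 ^ 2 * beta3 + beta2 * beta3 ^ 2)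


namespace Aux

abbrev A : Type := MvPolynomial (Fin 2) ℂ
abbrev T : Type := MvPolynomial (Fin 3) ℂ

/-- substitution u=0 criterion -/
lemma X0_dvd {f : A} (h : aeval ![(0:A), X 1] f = 0) : (X 0 : A) ∣ f := by
  set F := MvPolynomial.finSuccEquiv ℂ 1
  have h2 : (aeval ![(0 : MvPolynomial (Fin 1) ℂ), X 0]) f = 0 := by
    have hj : (rename (fun _ : Fin 1 => (1 : Fin 2))).comp
        (aeval ![(0 : MvPolynomial (Fin 1) ℂ), X 0]) = aeval ![(0:A), X 1] := by
      apply MvPolynomial.algHom_ext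
      intro i; fin_cases i <;> simp
    have h3 := (AlgHom.congr_fun hj f).trans h
    simp only [AlgHom.comp_apply] at h3
    have hinj : Function.Injective (rename (fun _ : Fin 1 => (1 : Fin 2)) :
        MvPolynomial (Fin 1) ℂ →ₐ[ℂ] A) :=
      rename_injective _ (Function.injective_of_subsingleton _)
    exact hinj (by simpa using h3)
  have key : Polynomial.eval 0 (F f) = 0 := by
    have hcomp : (Polynomial.evalRingHom (0 : MvPolynomial (Fin 1) ℂ)).comp
        (F : MvPolynomial (Fin 2) ℂ →+* Polynomial (MvPolynomial (Fin 1) ℂ))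
        = (aeval ![(0 : MvPolynomial (Fin 1) ℂ), X 0]).toRingHom := by
      apply MvPolynomial.ringHom_ext
      · intro r; simp [F, MvPolynomial.finSuccEquiv_apply, algebraMap_eq]
      · intro i
        refine Fin.cases ?_ ?_ i
        · rw [RingHom.comp_apply]
          show Polynomial.eval 0 (MvPolynomial.finSuccEquiv ℂ 1 (X 0)) = _
          rw [MvPolynomial.finSuccEquiv_X_zero]; simp
        · intro k
          have hk : k = 0 := Subsingleton.elim _ _
          subst hk
          rw [RingHom.comp_apply]
          show Polynomial.eval 0 (MvPolynomial.finSuccEquiv ℂ 1 (X (Fin.succ 0))) = _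
          rw [MvPolynomial.finSuccEquiv_X_succ]; simp
    have := congrArg (fun g => g f) (congrArg DFunLike.coe hcomp)
    simpa using this.trans h2
  have hdvd : Polynomial.X ∣ F f := Polynomial.X_dvd_iff.mpr
    ((Polynomial.coeff_zero_eq_eval_zero _).trans key)
  obtain ⟨q, hq⟩ := hdvd
  refine ⟨F.symm q, ?_⟩
  have hX : F.symm Polynomial.X = X 0 := by
    rw [← MvPolynomial.finSuccEquiv_X_zero (R := ℂ) (n := 1)]
    exact F.symm_apply_apply _
  calc f = F.symm (F f) := (F.symm_apply_apply f).symm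
    _ = F.symm Polynomial.X * F.symm q := by rw [hq, map_mul]
    _ = X 0 * F.symm q := by rw [hX]

end Aux

namespace Aux

def dd : A := X 0 * X 1 * (X 0 - X 1)

lemma X1_dvd {f : A} (h : aeval ![X 0, (0:A)] f = 0) : (X 1 : A) ∣ f := by
  have hsw : (Equiv.swap (0 : Fin 2) 1 : Fin 2 → Fin 2) ∘ (Equiv.swap (0 : Fin 2) 1) = id := by
    funext i; simp
  have h0 : aeval ![(0:A), X 1] (rename (Equiv.swap (0 : Fin 2) 1) f) = 0 := by
    rw [aeval_rename]
    have : (![(0:A), X 1] ∘ (Equiv.swap (0 : Fin 2) 1)) = ![X 1, (0:A)] := by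
      funext i; fin_cases i <;> simp
    rw [this]
    have hc : (aeval ![X 1, (0:A)] : A →ₐ[ℂ] A)
        = (rename (Equiv.swap (0 : Fin 2) 1)).comp (aeval ![X 0, (0:A)]) := by
      apply MvPolynomial.algHom_ext
      intro i; fin_cases i <;> simp
    rw [hc, AlgHom.comp_apply, h, map_zero]
  obtain ⟨q, hq⟩ := X0_dvd h0
  refine ⟨rename (Equiv.swap (0 : Fin 2) 1) q, ?_⟩
  have := congrArg (rename (Equiv.swap (0 : Fin 2) 1)) hq
  rw [rename_rename, hsw, rename_id, AlgHom.id_apply] at this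
  rw [this, map_mul, rename_X]
  simp

def Phi : A →ₐ[ℂ] A := aeval ![X 0, X 0 - X 1]

lemma Phi_Phi (f : A) : Phi (Phi f) = f := by
  have : Phi.comp Phi = AlgHom.id ℂ A := by
    apply MvPolynomial.algHom_ext
    intro i; fin_cases i <;> simp [Phi]
  exact congrArg (fun g => g f) (congrArg DFunLike.coe this)

lemma Xdiff_dvd {f : A} (h : aeval ![(X 0 : A), X 0] f = 0) : (X 0 - X 1 : A) ∣ f := by
  have h1 : aeval ![X 0, (0:A)] (Phi f) = 0 := by
    have hc : (aeval ![X 0, (0:A)] : A →ₐ[ℂ] A).comp Phi = (aeval ![(X 0 : A), X 0] : A →ₐ[ℂ] A) := by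
      apply MvPolynomial.algHom_ext
      intro i; fin_cases i <;> simp [Phi]
    have := AlgHom.congr_fun hc f
    simp only [AlgHom.comp_apply] at this
    rw [this, h]
  obtain ⟨q, hq⟩ := X1_dvd h1
  refine ⟨Phi q, ?_⟩
  have := congrArg Phi hq
  rw [Phi_Phi, map_mul] at this
  rw [this]
  congr 1
  simp [Phi]

lemma dd_dvd {w : A} (h0 : aeval ![(0:A), X 1] w = 0) (h1 : aeval ![X 0, (0:A)] w = 0)
    (h2 : aeval ![(X 0 : A), X 0] w = 0) : ∃ g : A, w = dd * g := by
  obtain ⟨g1, hg1⟩ := X0_dvd h0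
  have e1 : aeval ![X 0, (0:A)] g1 = 0 := by
    rw [hg1, map_mul] at h1
    simpa using (mul_eq_zero.mp h1).resolve_left (by simpa using X_ne_zero (0 : Fin 2))
  obtain ⟨g2, hg2⟩ := X1_dvd e1
  have e2 : aeval ![(X 0 : A), X 0] g2 = 0 := by
    rw [hg1, hg2, map_mul, map_mul] at h2
    have hx : (X (0:Fin 2) : A) ≠ 0 := X_ne_zero _
    have : ((aeval ![(X 0 : A), X 0] : A →ₐ[ℂ] A) (X 0)) = X 0 := by simp
    rw [this] at h2
    have h2' : (X (0:Fin 2) : A) * (((aeval ![(X 0 : A), X 0] : A →ₐ[ℂ] A)) (X 1) * ((aeval ![(X 0 : A), X 0] : A →ₐ[ℂ] A)) g2) = 0 := by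
      linear_combination h2
    have := (mul_eq_zero.mp h2').resolve_left hx
    have hx1 : (((aeval ![(X 0 : A), X 0] : A →ₐ[ℂ] A)) (X (1:Fin 2))) = X 0 := by simp
    rw [hx1] at this
    exact (mul_eq_zero.mp this).resolve_left hx
  obtain ⟨g3, hg3⟩ := Xdiff_dvd e2
  exact ⟨g3, by rw [hg1, hg2, hg3, dd]; ring⟩

end Aux

namespace Aux

def gc : A →ₐ[ℂ] A := aeval ![(X 1 : A), X 0]
def gt : A →ₐ[ℂ] A := aeval ![(X 0 : A) - X 1, -X 1]
def a2 : A := (X 0:A) ^ 2 + X 1 ^ 2 - X 0 * X 1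
def a3 : A := 2 * ((X 0:A) ^ 3 + X 1 ^ 3) - 3 * ((X 0:A) ^ 2 * X 1 + X 0 * X 1 ^ 2)

def phi : A →ₐ[ℂ] T := aeval ![(X 0 : T) - X 1, X 0 - X 2]
def chi : T →ₐ[ℂ] A := aeval ![(1/3:ℂ) • ((X 0:A) + X 1), (1/3:ℂ) • ((X 1:A) - 2 * X 0),
  (1/3:ℂ) • ((X 0:A) - 2 * X 1)]

lemma chi_phi : chi.comp phi = AlgHom.id ℂ A := by
  apply MvPolynomial.algHom_ext
  intro i
  fin_cases i <;>
    (apply MvPolynomial.funext; intro x; simp [phi, chi, smul_eq_C_mul]; ring)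

lemma ren12_phi : ((rename ⇑(Equiv.swap (1:Fin 3) 2) : T →ₐ[ℂ] T)).comp phi = phi.comp gc := by
  apply MvPolynomial.algHom_ext
  intro i
  fin_cases i <;>
    (apply MvPolynomial.funext; intro x; simp [phi, gc, Equiv.swap_apply_def]; try ring)

lemma ren02_phi : ((rename ⇑(Equiv.swap (0:Fin 3) 2) : T →ₐ[ℂ] T)).comp phi = phi.comp gt := by
  apply MvPolynomial.algHom_ext
  intro i
  fin_cases i <;>
    (apply MvPolynomial.funext; intro x; simp [phi, gt, Equiv.swap_apply_def]; try ring)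

lemma all_rename {g : T} (h12 : rename ⇑(Equiv.swap (1:Fin 3) 2) g = g)
    (h02 : rename ⇑(Equiv.swap (0:Fin 3) 2) g = g) :
    ∀ σ : Equiv.Perm (Fin 3), rename ⇑σ g = g := by
  have hswap : ∀ x y : Fin 3, x ≠ y → rename ⇑(Equiv.swap x y) g = g := by
    have h01 : rename ⇑(Equiv.swap (0:Fin 3) 1) g = g := by
      have hd : Equiv.swap (0:Fin 3) 1 = Equiv.swap 0 2 * (Equiv.swap 1 2 * Equiv.swap 0 2) := by
        decide
      rw [hd, Equiv.Perm.coe_mul, ← rename_rename, Equiv.Perm.coe_mul, ← rename_rename,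
        h02, h12, h02]
    intro x y hxy
    fin_cases x <;> fin_cases y <;> simp_all <;>
      first
        | exact h01 | exact h02 | exact h12
        | (rw [Equiv.swap_comm]; first | exact h01 | exact h02 | exact h12)
  intro σ
  refine Equiv.Perm.swap_induction_on σ (by simp) ?_
  intro f x y hxy ih
  rw [Equiv.Perm.coe_mul, ← rename_rename, ih, hswap x y hxy]

lemma e1_eq : esymm (Fin 3) ℂ 1 = X 0 + X 1 + X 2 := by
  simp [esymm, Finset.powersetCard_one, Finset.sum_map, Fin.sum_univ_three]

lemma e2_eq : esymm (Fin 3) ℂ 2 = X 0 * X 1 + X 0 * X 2 + X 1 * X 2 := by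
  have hp : Finset.powersetCard 2 (Finset.univ : Finset (Fin 3))
      = {{0,1},{0,2},{1,2}} := by decide
  rw [esymm, hp, Finset.sum_insert (by decide), Finset.sum_insert (by decide),
    Finset.sum_singleton, Finset.prod_insert (by decide), Finset.prod_singleton,
    Finset.prod_insert (by decide), Finset.prod_singleton,
    Finset.prod_insert (by decide), Finset.prod_singleton]
  ring

lemma e3_eq : esymm (Fin 3) ℂ 3 = X 0 * X 1 * X 2 := by
  have hp : Finset.powersetCard 3 (Finset.univ : Finset (Fin 3))
      = {({0,1,2} : Finset (Fin 3))} := by decide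
  rw [esymm, hp, Finset.sum_singleton, Finset.prod_insert (by decide),
    Finset.prod_insert (by decide), Finset.prod_singleton]
  ring

lemma chi_e1 : chi (esymm (Fin 3) ℂ 1) = 0 := by
  rw [e1_eq]
  apply MvPolynomial.funext; intro x; simp [chi, smul_eq_C_mul]; ring

lemma chi_e2 : chi (esymm (Fin 3) ℂ 2) = (-(1/3) : ℂ) • a2 := by
  rw [e2_eq]
  apply MvPolynomial.funext; intro x; simp [chi, a2, smul_eq_C_mul]; ring

lemma chi_e3 : chi (esymm (Fin 3) ℂ 3) = (-(1/27) : ℂ) • a3 := by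
  rw [e3_eq]
  apply MvPolynomial.funext; intro x; simp [chi, a3, smul_eq_C_mul]; ring

lemma core_inv {w : A} (hs : gc w = w) (ht : gt w = w) :
    w ∈ Algebra.adjoin ℂ {a2, a3} := by
  have h12 : rename ⇑(Equiv.swap (1:Fin 3) 2) (phi w) = phi w := by
    have := AlgHom.congr_fun ren12_phi w
    simp only [AlgHom.comp_apply] at this
    rw [this, hs]
  have h02 : rename ⇑(Equiv.swap (0:Fin 3) 2) (phi w) = phi w := by
    have := AlgHom.congr_fun ren02_phi w
    simp only [AlgHom.comp_apply] at this
    rw [this, ht]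
  have hsym : (phi w).IsSymmetric := fun σ => all_rename h12 h02 σ
  obtain ⟨q, hq⟩ := esymmAlgHom_surjective (σ := Fin 3) ℂ (n := 3) (by simp)
    ⟨phi w, (mem_symmetricSubalgebra _).mpr hsym⟩
  have hval : phi w = aeval (fun i : Fin 3 => esymm (Fin 3) ℂ (i + 1)) q := by
    have := congrArg Subtype.val hq
    rw [esymmAlgHom_apply] at this
    exact this.symm
  have hw : w = aeval (fun i : Fin 3 => chi (esymm (Fin 3) ℂ (i+1))) q := by
    have h1 : w = chi (phi w) := by
      have := AlgHom.congr_fun chi_phi w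
      simp only [AlgHom.comp_apply, AlgHom.id_apply] at this
      exact this.symm
    rw [h1, hval, ← AlgHom.comp_apply, comp_aeval]
  rw [hw]
  have hmem : (aeval (fun i : Fin 3 => chi (esymm (Fin 3) ℂ (i+1)))) q
      ∈ (aeval (fun i : Fin 3 => chi (esymm (Fin 3) ℂ (i+1)))).range :=
    Set.mem_range_self q
  rw [← Algebra.adjoin_range_eq_range_aeval] at hmem
  refine Algebra.adjoin_le ?_ hmem
  rintro x ⟨i, rfl⟩
  fin_cases i
  · show chi (esymm (Fin 3) ℂ 1) ∈ _
    rw [chi_e1]; exact Subalgebra.zero_mem _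
  · show chi (esymm (Fin 3) ℂ 2) ∈ _
    rw [chi_e2]; exact Subalgebra.smul_mem _ (Algebra.subset_adjoin (by simp)) _
  · show chi (esymm (Fin 3) ℂ 3) ∈ _
    rw [chi_e3]; exact Subalgebra.smul_mem _ (Algebra.subset_adjoin (by simp)) _

end Aux

namespace Aux

lemma smul_half {x : A} (h : x = -x) : x = 0 := by
  have h2 : (2:ℂ) • x = 0 := by
    rw [two_smul]; nth_rewrite 1 [h]; ring
  rcases smul_eq_zero.mp h2 with h' | h'
  · exact absurd h' two_ne_zero
  · exact h'

lemma gc_dd : gc dd = -dd := by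
  apply MvPolynomial.funext; intro x; simp [gc, dd]; ring

lemma gt_dd : gt dd = -dd := by
  apply MvPolynomial.funext; intro x; simp [gt, dd]; ring

lemma gc_a2 : gc a2 = a2 := by
  apply MvPolynomial.funext; intro x; simp [gc, a2]; ring

lemma gc_a3 : gc a3 = a3 := by
  apply MvPolynomial.funext; intro x; simp [gc, a3, map_ofNat]; ring

lemma gt_a2 : gt a2 = a2 := by
  apply MvPolynomial.funext; intro x; simp [gt, a2]; ring

lemma gt_a3 : gt a3 = a3 := by
  apply MvPolynomial.funext; intro x; simp [gt, a3, map_ofNat]; ring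

lemma dd_ne : (dd : A) ≠ 0 := by
  intro h
  have := congrArg (eval ![(2:ℂ), 1]) h
  simp [dd] at this
  norm_num at this

lemma core_sgn {w : A} (hs : gc w = -w) (ht : gt w = -w) :
    ∃ g : A, w = dd * g ∧ g ∈ Algebra.adjoin ℂ {a2, a3} := by
  have h1 : aeval ![(X 0:A), (0:A)] w = 0 := by
    have hc : (aeval ![(X 0:A), (0:A)] : A →ₐ[ℂ] A).comp gt
        = (aeval ![(X 0:A), (0:A)] : A →ₐ[ℂ] A) := by
      apply MvPolynomial.algHom_ext
      intro i; fin_cases i <;> simp [gt]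
    have h := AlgHom.congr_fun hc w
    simp only [AlgHom.comp_apply] at h
    rw [ht, map_neg] at h
    exact smul_half h.symm
  have h2 : aeval ![(X 0:A), (X 0:A)] w = 0 := by
    have hc : (aeval ![(X 0:A), (X 0:A)] : A →ₐ[ℂ] A).comp gc
        = (aeval ![(X 0:A), (X 0:A)] : A →ₐ[ℂ] A) := by
      apply MvPolynomial.algHom_ext
      intro i; fin_cases i <;> simp [gc]
    have h := AlgHom.congr_fun hc w
    simp only [AlgHom.comp_apply] at h
    rw [hs, map_neg] at h
    exact smul_half h.symm
  have hr : gc (gt (gc w)) = -w := by rw [hs, map_neg, ht, map_neg, map_neg, hs, neg_neg]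
  have h0 : aeval ![(0:A), (X 1:A)] w = 0 := by
    have hc : ((aeval ![(0:A), (X 1:A)] : A →ₐ[ℂ] A).comp gc).comp (gt.comp gc)
        = (aeval ![(0:A), (X 1:A)] : A →ₐ[ℂ] A) := by
      apply MvPolynomial.algHom_ext
      intro i; fin_cases i <;> simp [gc, gt]
    have h := AlgHom.congr_fun hc w
    simp only [AlgHom.comp_apply] at h
    rw [hr, map_neg] at h
    exact smul_half h.symm
  obtain ⟨g, hg⟩ := dd_dvd h0 h1 h2
  refine ⟨g, hg, ?_⟩
  have hcancel : ∀ (F : A →ₐ[ℂ] A), F dd = -dd → F w = -w → F g = g := by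
    intro F hFd hFw
    rw [hg, map_mul, hFd] at hFw
    have h2' : dd * (F g) = dd * g := by linear_combination -hFw
    exact mul_left_cancel₀ dd_ne h2'
  exact core_inv (hcancel gc gc_dd hs) (hcancel gt gt_dd ht)

end Aux


namespace Aux

def Psi : A →ₐ[ℂ] R := aeval ![beta2, beta3]

def rho : R →ₐ[ℂ] A :=
  aeval fun p : Fin 2 × Fin 3 =>
    if p.1 = 0 then 1 else if p.2 = 1 then X 1 else if p.2 = 2 then X 0 else 0

lemma rho_Psi : rho.comp Psi = AlgHom.id ℂ A := by
  apply MvPolynomial.algHom_ext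
  intro i
  fin_cases i <;>
    (apply MvPolynomial.funext; intro x;
     simp [Psi, rho, beta2, beta3, del, Xe]; try ring)

lemma Psi_inj : Function.Injective Psi := by
  intro x y h
  have hx := AlgHom.congr_fun rho_Psi x
  have hy := AlgHom.congr_fun rho_Psi y
  simp only [AlgHom.comp_apply, AlgHom.id_apply] at hx hy
  rw [← hx, ← hy, h]

lemma range_Psi : Algebra.adjoin ℂ {beta2, beta3} = Psi.range := by
  have : ({beta2, beta3} : Set R) = Set.range ![beta2, beta3] := by
    ext z
    simp [Fin.exists_fin_two]
    tauto
  rw [this, Algebra.adjoin_range_eq_range_aeval]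
  rfl

lemma Psi_a2 : Psi a2 = alpha2 := by
  apply MvPolynomial.funext; intro x
  simp [Psi, a2, alpha2, beta2, beta3, del, Xe]; try ring

lemma Psi_a3 : Psi a3 = alpha3 := by
  apply MvPolynomial.funext; intro x
  simp [Psi, a3, alpha3, beta2, beta3, del, Xe, map_ofNat]; try ring

lemma Psi_dd : Psi dd = alpha1 * gamma2 := by
  apply MvPolynomial.funext; intro x
  simp [Psi, dd, alpha1, gamma2, beta2, beta3, del, Xe]; try ring

lemma map_adjoin_Psi :
    Subalgebra.map Psi (Algebra.adjoin ℂ {a2, a3}) = Algebra.adjoin ℂ {alpha2, alpha3} := by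
  rw [AlgHom.map_adjoin, Set.image_pair, Psi_a2, Psi_a3]

end Aux

namespace Aux

lemma permAct_mul (σ τ : Equiv.Perm (Fin 3)) :
    permAct (σ * τ) = (permAct σ).comp (permAct τ) := by
  apply MvPolynomial.algHom_ext
  intro p
  simp [permAct, Equiv.Perm.mul_apply]

lemma permAct_one : permAct 1 = AlgHom.id ℂ R := by
  apply MvPolynomial.algHom_ext
  intro p
  simp [permAct]

lemma comm_c : (permAct (Equiv.swap 1 2)).comp Psi = Psi.comp gc := by
  apply MvPolynomial.algHom_ext
  intro i
  fin_cases i <;>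
    (apply MvPolynomial.funext; intro x;
     simp [permAct, Psi, gc, beta2, beta3, del, Xe, Equiv.swap_apply_def]; try ring)

lemma comm_t : (permAct (Equiv.swap 0 1)).comp Psi = Psi.comp gt := by
  apply MvPolynomial.algHom_ext
  intro i
  fin_cases i <;>
    (apply MvPolynomial.funext; intro x;
     simp [permAct, Psi, gt, beta2, beta3, del, Xe, Equiv.swap_apply_def]; try ring)

def gr : A →ₐ[ℂ] A := aeval ![-(X 0:A), X 1 - X 0]

lemma comm_r : (permAct (Equiv.swap 0 2)).comp Psi = Psi.comp gr := by
  apply MvPolynomial.algHom_ext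
  intro i
  fin_cases i <;>
    (apply MvPolynomial.funext; intro x;
     simp [permAct, Psi, gr, beta2, beta3, del, Xe, Equiv.swap_apply_def]; try ring)

lemma gr_a2 : gr a2 = a2 := by
  apply MvPolynomial.funext; intro x; simp [gr, a2]; try ring

lemma gr_a3 : gr a3 = a3 := by
  apply MvPolynomial.funext; intro x; simp [gr, a3, map_ofNat]; try ring

lemma gr_dd : gr dd = -dd := by
  apply MvPolynomial.funext; intro x; simp [gr, dd]; try ring

def Good (σ : Equiv.Perm (Fin 3)) (g : A →ₐ[ℂ] A) : Prop :=
  (permAct σ).comp Psi = Psi.comp g ∧ g a2 = a2 ∧ g a3 = a3 ∧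
    g dd = ((Equiv.Perm.sign σ : ℤ) : ℂ) • dd

set_option maxHeartbeats 1000000 in
lemma good_swap : ∀ x y : Fin 3, x ≠ y → ∃ g, Good (Equiv.swap x y) g := by
  have neg_smul_dd : ∀ τ : Equiv.Perm (Fin 3), Equiv.Perm.sign τ = -1 →
      ∀ v : A, v = -dd → v = ((Equiv.Perm.sign τ : ℤ) : ℂ) • dd := by
    intro τ hτ v hv
    rw [hv, hτ]
    push_cast
    simp
  have h12 : ∃ g, Good (Equiv.swap (1:Fin 3) 2) g :=
    ⟨gc, comm_c, gc_a2, gc_a3,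
      neg_smul_dd _ (Equiv.Perm.sign_swap (by decide)) _ gc_dd⟩
  have h01 : ∃ g, Good (Equiv.swap (0:Fin 3) 1) g :=
    ⟨gt, comm_t, gt_a2, gt_a3,
      neg_smul_dd _ (Equiv.Perm.sign_swap (by decide)) _ gt_dd⟩
  have h02 : ∃ g, Good (Equiv.swap (0:Fin 3) 2) g :=
    ⟨gr, comm_r, gr_a2, gr_a3,
      neg_smul_dd _ (Equiv.Perm.sign_swap (by decide)) _ gr_dd⟩
  intro x y hxy
  fin_cases x <;> fin_cases y <;> simp_all <;>
    first
      | exact h01 | exact h02 | exact h12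
      | (rw [Equiv.swap_comm]; first | exact h01 | exact h02 | exact h12)

lemma good_all : ∀ σ : Equiv.Perm (Fin 3), ∃ g, Good σ g := by
  intro σ
  refine Equiv.Perm.swap_induction_on σ ?_ ?_
  · refine ⟨AlgHom.id ℂ A, ?_, rfl, rfl, ?_⟩
    · rw [permAct_one]
      ext f
      simp
    · simp
  · rintro f x y hxy ⟨g, hcomp, ha2, ha3, hdd⟩
    obtain ⟨gs, hscomp, hsa2, hsa3, hsdd⟩ := good_swap x y hxy
    refine ⟨gs.comp g, ?_, ?_, ?_, ?_⟩
    · rw [permAct_mul, AlgHom.comp_assoc, hcomp, ← AlgHom.comp_assoc, hscomp,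
        AlgHom.comp_assoc]
    · simp [AlgHom.comp_apply, ha2, hsa2]
    · simp [AlgHom.comp_apply, ha3, hsa3]
    · rw [AlgHom.comp_apply, hdd, map_smul, hsdd, smul_smul, map_mul]
      congr 1
      push_cast
      ring

lemma fix_adjoin {g : A →ₐ[ℂ] A} (h2 : g a2 = a2) (h3 : g a3 = a3) {w : A}
    (hw : w ∈ Algebra.adjoin ℂ {a2, a3}) : g w = w := by
  induction hw using Algebra.adjoin_induction with
  | mem x hx => rcases hx with h | h <;> subst h <;> assumption
  | algebraMap r => exact g.commutes r
  | add x y hx hy ihx ihy => rw [map_add, ihx, ihy]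
  | mul x y hx hy ihx ihy => rw [map_mul, ihx, ihy]

end Aux

/-- `ℂ[β₂, β₃]` is `S₃`-stable, `ℂ[β₂, β₃]^{S₃} = ℂ[α₂, α₃]`, and
`ℂ[β₂, β₃]^{sgn} = α₁γ₂ · ℂ[α₂, α₃]`. -/
theorem stmt_12 :
    (∀ σ : Equiv.Perm (Fin 3), ∀ f ∈ Algebra.adjoin ℂ {beta2, beta3},
      permAct σ f ∈ Algebra.adjoin ℂ {beta2, beta3}) ∧
    ({f : R | f ∈ Algebra.adjoin ℂ {beta2, beta3} ∧
        ∀ σ : Equiv.Perm (Fin 3), permAct σ f = f} =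
      (Algebra.adjoin ℂ {alpha2, alpha3} : Set R)) ∧
    ({f : R | f ∈ Algebra.adjoin ℂ {beta2, beta3} ∧
        ∀ σ : Equiv.Perm (Fin 3), permAct σ f = ((Equiv.Perm.sign σ : ℤ) : ℂ) • f} =
      (fun h => alpha1 * gamma2 * h) '' (Algebra.adjoin ℂ {alpha2, alpha3} : Set R)) := by
  refine ⟨?_, ?_, ?_⟩
  · -- part 1 : stability
    intro σ f hf
    rw [Aux.range_Psi] at hf ⊢
    obtain ⟨w, rfl⟩ := (AlgHom.mem_range _).mp hf
    obtain ⟨g, hcomp, -, -, -⟩ := Aux.good_all σ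
    have h := AlgHom.congr_fun hcomp w
    simp only [AlgHom.comp_apply] at h
    exact (AlgHom.mem_range _).mpr ⟨g w, h.symm⟩
  · -- part 2 : invariants
    ext f
    constructor
    · rintro ⟨hf, hinv⟩
      rw [Aux.range_Psi] at hf
      obtain ⟨w, rfl⟩ := (AlgHom.mem_range _).mp hf
      have hc : Aux.gc w = w := by
        apply Aux.Psi_inj
        have h := AlgHom.congr_fun Aux.comm_c w
        simp only [AlgHom.comp_apply] at h
        exact h.symm.trans (hinv (Equiv.swap 1 2))
      have htw : Aux.gt w = w := by
        apply Aux.Psi_inj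
        have h := AlgHom.congr_fun Aux.comm_t w
        simp only [AlgHom.comp_apply] at h
        exact h.symm.trans (hinv (Equiv.swap 0 1))
      have hmem : Aux.Psi w ∈ Subalgebra.map Aux.Psi (Algebra.adjoin ℂ {Aux.a2, Aux.a3}) :=
        ⟨w, Aux.core_inv hc htw, rfl⟩
      rw [Aux.map_adjoin_Psi] at hmem
      exact hmem
    · intro hf
      have hf' : f ∈ Subalgebra.map Aux.Psi (Algebra.adjoin ℂ {Aux.a2, Aux.a3}) := by
        rw [Aux.map_adjoin_Psi]; exact hf
      obtain ⟨w, hw, rfl⟩ := hf'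
      refine ⟨by rw [Aux.range_Psi]; exact (AlgHom.mem_range _).mpr ⟨w, rfl⟩, ?_⟩
      intro σ
      obtain ⟨g, hcomp, ha2, ha3, -⟩ := Aux.good_all σ
      have h := AlgHom.congr_fun hcomp w
      simp only [AlgHom.comp_apply] at h
      exact h.trans (congrArg Aux.Psi (Aux.fix_adjoin ha2 ha3 hw))
  · -- part 3 : sign part
    ext f
    constructor
    · rintro ⟨hf, hsgn⟩
      rw [Aux.range_Psi] at hf
      obtain ⟨w, rfl⟩ := (AlgHom.mem_range _).mp hf
      have hc : Aux.gc w = -w := by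
        apply Aux.Psi_inj
        have h := AlgHom.congr_fun Aux.comm_c w
        simp only [AlgHom.comp_apply] at h
        refine h.symm.trans ((hsgn (Equiv.swap 1 2)).trans ?_)
        rw [Equiv.Perm.sign_swap (by decide), map_neg]
        push_cast
        simp
      have ht : Aux.gt w = -w := by
        apply Aux.Psi_inj
        have h := AlgHom.congr_fun Aux.comm_t w
        simp only [AlgHom.comp_apply] at h
        refine h.symm.trans ((hsgn (Equiv.swap 0 1)).trans ?_)
        rw [Equiv.Perm.sign_swap (by decide), map_neg]
        push_cast
        simp
      obtain ⟨g, hgw, hgmem⟩ := Aux.core_sgn hc ht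
      refine ⟨Aux.Psi g, ?_, ?_⟩
      · have hmem : Aux.Psi g ∈ Subalgebra.map Aux.Psi (Algebra.adjoin ℂ {Aux.a2, Aux.a3}) :=
          ⟨g, hgmem, rfl⟩
        rw [Aux.map_adjoin_Psi] at hmem
        exact hmem
      · show alpha1 * gamma2 * Aux.Psi g = Aux.Psi w
        rw [hgw, map_mul, Aux.Psi_dd]
    · rintro ⟨h, hh, rfl⟩
      have hh' : h ∈ Subalgebra.map Aux.Psi (Algebra.adjoin ℂ {Aux.a2, Aux.a3}) := by
        rw [Aux.map_adjoin_Psi]; exact hh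
      obtain ⟨w, hw, rfl⟩ := hh'
      have hkey : alpha1 * gamma2 * Aux.Psi w = Aux.Psi (Aux.dd * w) := by
        rw [map_mul, Aux.Psi_dd]
      constructor
      · show alpha1 * gamma2 * Aux.Psi w ∈ _
        rw [Aux.range_Psi, hkey]
        exact ⟨Aux.dd * w, rfl⟩
      · intro σ
        show permAct σ (alpha1 * gamma2 * Aux.Psi w)
          = ((Equiv.Perm.sign σ : ℤ) : ℂ) • (alpha1 * gamma2 * Aux.Psi w)
        obtain ⟨g, hcomp, ha2, ha3, hdd⟩ := Aux.good_all σ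
        have happ := AlgHom.congr_fun hcomp (Aux.dd * w)
        simp only [AlgHom.comp_apply] at happ
        rw [hkey, happ, map_mul, hdd, Aux.fix_adjoin ha2 ha3 hw, smul_mul_assoc, map_smul]
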